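/- arXiv:1910.02253 — 2 statements merged into one kernel-verified Lean document; each statement's English description precedes it below -/
import Mathlib

section
/- Let V ⊂ H ⊂ V* be a Gelfand triple of Hilbert spaces and let A : [0,T] × V × L₂(U,H) → V* satisfy: (local monotonicity) ⟨A(t,v₁,φ₁)−A(t,v₂,φ₂), v₁−v₂⟩ ≤ ρ(v₂)[‖v₁−v₂‖_H² + ‖v₁−v₂‖_H ‖φ₁−φ₂‖_{L₂(U,H)}] for a locally bounded ρ : V → [0,∞), and (hemicontinuity) s ↦ ⟨A(t,v₁+s v₂,φ), v⟩ continuous. Then for every t, v ∈ V and z₁,z₂ ∈ L₂(U,H), ‖A(t,v,z₁) − A(t,v,z₂)‖_{V*} ≤ C(‖v‖_V) ‖z₁−z₂‖_{L₂(U,H)}, where C(‖v‖_V) = 2 sup{ρ(w) : ‖w‖_V ≤ ‖v‖_V + 1} (i.e. A is locally Lipschitz in z). -/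
open MeasureTheory Set

/-- Local monotonicity plus hemicontinuity imply local Lipschitz continuity of
`A(t,v,·)` in the third variable, with local Lipschitz constant
`C(‖v‖_V) = 2 sup{ρ(w) : ‖w‖_V ≤ ‖v‖_V + 1}`.  Here `V ⊂ H ⊂ V*` is a Gelfand
triple (the continuous dense embedding being `i` with `‖i v‖_H ≤ ‖v‖_V`), and
`Z` plays the role of the Hilbert–Schmidt space `L₂(U,H)`. -/
theorem stmt_12 {V H Z : Type*}
    [NormedAddCommGroup V] [InnerProductSpace ℝ V]
    [NormedAddCommGroup H] [InnerProductSpace ℝ H]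
    [NormedAddCommGroup Z] [NormedSpace ℝ Z]
    (i : V →L[ℝ] H) (hi : ∀ v, ‖i v‖ ≤ ‖v‖) (hinj : Function.Injective i)
    (hdense : DenseRange i)
    (A : ℝ → V → Z → (V →L[ℝ] ℝ)) (ρ : V → ℝ) (hρnn : ∀ v, 0 ≤ ρ v)
    (hρb : ∀ r : ℝ, BddAbove (ρ '' {w | ‖w‖ ≤ r}))
    (hmono : ∀ (t : ℝ) (v₁ v₂ : V) (φ₁ φ₂ : Z),
      (A t v₁ φ₁ - A t v₂ φ₂) (v₁ - v₂) ≤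
        ρ v₂ * (‖i (v₁ - v₂)‖ ^ 2 + ‖i (v₁ - v₂)‖ * ‖φ₁ - φ₂‖))
    (hhemi : ∀ (t : ℝ) (v₁ v₂ : V) (φ : Z) (w : V),
      Continuous fun s : ℝ => (A t (v₁ + s • v₂) φ) w) :
    ∀ (t : ℝ) (v : V) (z₁ z₂ : Z),
      ‖A t v z₁ - A t v z₂‖ ≤
        (2 * sSup (ρ '' {w | ‖w‖ ≤ ‖v‖ + 1})) * ‖z₁ - z₂‖ := by
  intro t v z₁ z₂
  -- Key pointwise estimate
  have key : ∀ (y₁ y₂ : Z) (w : V),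
      (A t v y₁ - A t v y₂) w ≤ ρ v * (‖w‖ * ‖y₁ - y₂‖) := by
    intro y₁ y₂ w
    -- limit of the monotonicity inequality along s → 0⁺
    have hev : ∀ s ∈ Ioi (0:ℝ),
        (A t (v + s • w) y₁) w - (A t v y₂) w ≤
          ρ v * (s * ‖i w‖ ^ 2 + ‖i w‖ * ‖y₁ - y₂‖) := by
      intro s hs
      have hs' : (0:ℝ) < s := hs
      have h := hmono t (v + s • w) v y₁ y₂
      have h1 : v + s • w - v = s • w := by abel
      rw [h1] at h
      have h2 : (A t (v + s • w) y₁ - A t v y₂) (s • w)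
          = s * ((A t (v + s • w) y₁) w - (A t v y₂) w) := by
        simp [ContinuousLinearMap.sub_apply, mul_sub]
      have h3 : ‖i (s • w)‖ = s * ‖i w‖ := by
        rw [i.map_smul, norm_smul, Real.norm_eq_abs, abs_of_pos hs']
      rw [h2, h3] at h
      have h4 : ρ v * ((s * ‖i w‖) ^ 2 + s * ‖i w‖ * ‖y₁ - y₂‖)
          = s * (ρ v * (s * ‖i w‖ ^ 2 + ‖i w‖ * ‖y₁ - y₂‖)) := by ring
      rw [h4] at h
      exact le_of_mul_le_mul_left h hs'
    have hlim1 : Filter.Tendsto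
        (fun s : ℝ => (A t (v + s • w) y₁) w - (A t v y₂) w)
        (nhdsWithin 0 (Ioi 0))
        (nhds ((A t v y₁) w - (A t v y₂) w)) := by
      have hc : Continuous (fun s : ℝ => (A t (v + s • w) y₁) w - (A t v y₂) w) :=
        (hhemi t v w y₁ w).sub continuous_const
      have h0 := hc.tendsto 0
      simp only [zero_smul, add_zero] at h0
      exact h0.mono_left nhdsWithin_le_nhds
    have hlim2 : Filter.Tendsto
        (fun s : ℝ => ρ v * (s * ‖i w‖ ^ 2 + ‖i w‖ * ‖y₁ - y₂‖))
        (nhdsWithin 0 (Ioi 0))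
        (nhds (ρ v * (‖i w‖ * ‖y₁ - y₂‖))) := by
      have hc : Continuous (fun s : ℝ =>
          ρ v * (s * ‖i w‖ ^ 2 + ‖i w‖ * ‖y₁ - y₂‖)) := by fun_prop
      have := hc.tendsto 0
      simp only [zero_mul, zero_add] at this
      exact this.mono_left nhdsWithin_le_nhds
    have hle := le_of_tendsto_of_tendsto hlim1 hlim2 (Filter.eventually_of_mem self_mem_nhdsWithin hev)
    calc (A t v y₁ - A t v y₂) w = (A t v y₁) w - (A t v y₂) w := by
          simp [ContinuousLinearMap.sub_apply]
      _ ≤ ρ v * (‖i w‖ * ‖y₁ - y₂‖) := hle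
      _ ≤ ρ v * (‖w‖ * ‖y₁ - y₂‖) := by
          apply mul_le_mul_of_nonneg_left _ (hρnn v)
          exact mul_le_mul_of_nonneg_right (hi w) (norm_nonneg _)
  have hop : ‖A t v z₁ - A t v z₂‖ ≤ ρ v * ‖z₁ - z₂‖ := by
    apply ContinuousLinearMap.opNorm_le_bound _
      (mul_nonneg (hρnn v) (norm_nonneg _))
    intro w
    rw [Real.norm_eq_abs, abs_le]
    constructor
    · have h := key z₂ z₁ w
      have hne : (A t v z₂ - A t v z₁) w = -((A t v z₁ - A t v z₂) w) := by
        simp [ContinuousLinearMap.sub_apply]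
      rw [hne, norm_sub_rev z₂ z₁] at h
      ring_nf at h ⊢
      linarith
    · have h := key z₁ z₂ w
      ring_nf at h ⊢
      linarith
  have hmem : ρ v ∈ ρ '' {w | ‖w‖ ≤ ‖v‖ + 1} :=
    ⟨v, by simp [Set.mem_setOf_eq], rfl⟩
  have hsup : ρ v ≤ sSup (ρ '' {w | ‖w‖ ≤ ‖v‖ + 1}) :=
    le_csSup (hρb _) hmem
  have hsupnn : 0 ≤ sSup (ρ '' {w | ‖w‖ ≤ ‖v‖ + 1}) := le_trans (hρnn v) hsup
  calc ‖A t v z₁ - A t v z₂‖ ≤ ρ v * ‖z₁ - z₂‖ := hop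
    _ ≤ (2 * sSup (ρ '' {w | ‖w‖ ≤ ‖v‖ + 1})) * ‖z₁ - z₂‖ := by
        apply mul_le_mul_of_nonneg_right _ (norm_nonneg _)
        linarith
end

section
/- Let ρ : V → [0,∞) be locally bounded on a Hilbert space V, M > 0, and let R_M : ℝ → [0,1] be smooth with R_M(r)=1 for |r|≤M, R_M(r)=0 for |r|>M+1, |R_M'| ≤ 1. Suppose A : V × Z → H satisfies ⟨A(v₁,z)−A(v₂,z), v₁−v₂⟩_H ≤ ρ(v₂)‖v₁−v₂‖_H² whenever ‖v₂‖_V ≤ M+1, and ‖A(v,z)‖_H ≤ g(z) + ρ(v) for a function g. Then the truncated operator Ã(v,z) := R_M(‖v‖_V) A(v,z) satisfies a one-sided Lipschitz (monotonicity) bound: ⟨Ã(v₁,z)−Ã(v₂,z), v₁−v₂⟩_H ≤ C_M(z) ‖v₁−v₂‖_H² for all v₁, v₂ in any finite-dimensional subspace of V on which the V and H norms are equivalent, with C_M(z) depending on M, g(z), sup_{‖v‖_V ≤ M+1} ρ(v), and the norm equivalence constant. -/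
open MeasureTheory Set

/-- Truncating a locally monotone operator `A` by `R_M(‖v‖_V)` yields a one-sided
Lipschitz bound on any finite-dimensional subspace of `V` on which the `V`- and
`H`-norms are equivalent. -/
theorem stmt_14 {V H Z : Type*}
    [NormedAddCommGroup V] [InnerProductSpace ℝ V]
    [NormedAddCommGroup H] [InnerProductSpace ℝ H]
    (i : V →L[ℝ] H) (M : ℝ) (hM : 0 < M)
    (ρ : V → ℝ) (hρnn : ∀ v, 0 ≤ ρ v)
    (hρb : ∀ r : ℝ, BddAbove (ρ '' {v | ‖v‖ ≤ r}))
    (R : ℝ → ℝ) (hRsmooth : ContDiff ℝ (⊤ : ℕ∞) R)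
    (hRrange : ∀ r, R r ∈ Icc (0:ℝ) 1)
    (hR1 : ∀ r : ℝ, |r| ≤ M → R r = 1) (hR0 : ∀ r : ℝ, M + 1 < |r| → R r = 0)
    (hRlip : ∀ r s : ℝ, |R r - R s| ≤ |r - s|)
    (A : V → Z → H) (g : Z → ℝ)
    (hmono : ∀ (v₁ v₂ : V) (z : Z), ‖v₂‖ ≤ M + 1 →
      (inner ℝ (A v₁ z - A v₂ z) (i (v₁ - v₂)) : ℝ) ≤ ρ v₂ * ‖i (v₁ - v₂)‖ ^ 2)
    (hbound : ∀ (v : V) (z : Z), ‖A v z‖ ≤ g z + ρ v)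
    (S : Submodule ℝ V) (hfin : FiniteDimensional ℝ S) (c : ℝ) (hc : 0 < c)
    (hequiv : ∀ v ∈ S, ‖v‖ ≤ c * ‖i v‖) :
    ∀ z : Z, ∃ Cz : ℝ, ∀ v₁ ∈ S, ∀ v₂ ∈ S,
      (inner ℝ (R ‖v₁‖ • A v₁ z - R ‖v₂‖ • A v₂ z) (i (v₁ - v₂)) : ℝ) ≤
        Cz * ‖i (v₁ - v₂)‖ ^ 2 := by
  intro z
  set K : ℝ := sSup (ρ '' {v | ‖v‖ ≤ M + 1}) with hKdef
  have hK : ∀ v : V, ‖v‖ ≤ M + 1 → ρ v ≤ K := fun v hv =>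
    le_csSup (hρb (M + 1)) ⟨v, hv, rfl⟩
  have h0mem : ‖(0 : V)‖ ≤ M + 1 := by simp; linarith
  have hK0 : 0 ≤ K := le_trans (hρnn 0) (hK 0 h0mem)
  have hgK : 0 ≤ g z + K := by
    have h1 := hbound 0 z
    have h2 := hK 0 h0mem
    have := norm_nonneg (A 0 z)
    linarith
  refine ⟨K + c * (g z + K), ?_⟩
  have hCz0 : 0 ≤ K + c * (g z + K) := by positivity
  -- Key case: ‖v₂‖ ≤ M + 1
  have key : ∀ v₁ ∈ S, ∀ v₂ ∈ S, ‖v₂‖ ≤ M + 1 →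
      (inner ℝ (R ‖v₁‖ • A v₁ z - R ‖v₂‖ • A v₂ z) (i (v₁ - v₂)) : ℝ) ≤
        (K + c * (g z + K)) * ‖i (v₁ - v₂)‖ ^ 2 := by
    intro v₁ hv₁ v₂ hv₂ h2
    have hdecomp : R ‖v₁‖ • A v₁ z - R ‖v₂‖ • A v₂ z
        = R ‖v₁‖ • (A v₁ z - A v₂ z) + (R ‖v₁‖ - R ‖v₂‖) • A v₂ z := by
      rw [smul_sub, sub_smul]; abel
    rw [hdecomp, inner_add_left, real_inner_smul_left, real_inner_smul_left]
    have hsq : (0:ℝ) ≤ ‖i (v₁ - v₂)‖ ^ 2 := sq_nonneg _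
    -- first term
    have hR1range := hRrange ‖v₁‖
    have hx := hmono v₁ v₂ z h2
    have hterm1 : R ‖v₁‖ * (inner ℝ (A v₁ z - A v₂ z) (i (v₁ - v₂)) : ℝ)
        ≤ K * ‖i (v₁ - v₂)‖ ^ 2 := by
      rcases le_or_gt (inner ℝ (A v₁ z - A v₂ z) (i (v₁ - v₂)) : ℝ) 0 with h | h
      · have : R ‖v₁‖ * (inner ℝ (A v₁ z - A v₂ z) (i (v₁ - v₂)) : ℝ) ≤ 0 :=
          mul_nonpos_of_nonneg_of_nonpos hR1range.1 h
        have : (0:ℝ) ≤ K * ‖i (v₁ - v₂)‖ ^ 2 := by positivity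
        linarith
      · have h1 : R ‖v₁‖ * (inner ℝ (A v₁ z - A v₂ z) (i (v₁ - v₂)) : ℝ)
            ≤ (inner ℝ (A v₁ z - A v₂ z) (i (v₁ - v₂)) : ℝ) := by
          nlinarith [hR1range.1, hR1range.2]
        have h3 : ρ v₂ * ‖i (v₁ - v₂)‖ ^ 2 ≤ K * ‖i (v₁ - v₂)‖ ^ 2 :=
          mul_le_mul_of_nonneg_right (hK v₂ h2) hsq
        linarith
    -- second term
    have hterm2 : (R ‖v₁‖ - R ‖v₂‖) * (inner ℝ (A v₂ z) (i (v₁ - v₂)) : ℝ)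
        ≤ c * (g z + K) * ‖i (v₁ - v₂)‖ ^ 2 := by
      have hA2 : ‖A v₂ z‖ ≤ g z + K := le_trans (hbound v₂ z) (by linarith [hK v₂ h2])
      have hinner : (inner ℝ (A v₂ z) (i (v₁ - v₂)) : ℝ) ≤ ‖A v₂ z‖ * ‖i (v₁ - v₂)‖ :=
        real_inner_le_norm _ _
      have hinner' : |(inner ℝ (A v₂ z) (i (v₁ - v₂)) : ℝ)| ≤ ‖A v₂ z‖ * ‖i (v₁ - v₂)‖ :=
        abs_real_inner_le_norm _ _
      have hRdiff : |R ‖v₁‖ - R ‖v₂‖| ≤ ‖v₁ - v₂‖ :=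
        le_trans (hRlip _ _) (abs_norm_sub_norm_le _ _)
      have hVbd : ‖v₁ - v₂‖ ≤ c * ‖i (v₁ - v₂)‖ :=
        hequiv _ (Submodule.sub_mem S hv₁ hv₂)
      calc (R ‖v₁‖ - R ‖v₂‖) * (inner ℝ (A v₂ z) (i (v₁ - v₂)) : ℝ)
          ≤ |(R ‖v₁‖ - R ‖v₂‖) * (inner ℝ (A v₂ z) (i (v₁ - v₂)) : ℝ)| := le_abs_self _
        _ = |R ‖v₁‖ - R ‖v₂‖| * |(inner ℝ (A v₂ z) (i (v₁ - v₂)) : ℝ)| := abs_mul _ _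
        _ ≤ (c * ‖i (v₁ - v₂)‖) * ((g z + K) * ‖i (v₁ - v₂)‖) := by
            apply mul_le_mul (le_trans hRdiff hVbd)
              (le_trans hinner' (mul_le_mul_of_nonneg_right hA2 (norm_nonneg _)))
              (abs_nonneg _) (by positivity)
        _ = c * (g z + K) * ‖i (v₁ - v₂)‖ ^ 2 := by ring
    have : (K + c * (g z + K)) * ‖i (v₁ - v₂)‖ ^ 2
        = K * ‖i (v₁ - v₂)‖ ^ 2 + c * (g z + K) * ‖i (v₁ - v₂)‖ ^ 2 := by ring
    linarith
  intro v₁ hv₁ v₂ hv₂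
  rcases le_or_gt ‖v₂‖ (M + 1) with h2 | h2
  · exact key v₁ hv₁ v₂ hv₂ h2
  · rcases le_or_gt ‖v₁‖ (M + 1) with h1 | h1
    · have hswap := key v₂ hv₂ v₁ hv₁ h1
      have heq : (inner ℝ (R ‖v₂‖ • A v₂ z - R ‖v₁‖ • A v₁ z) (i (v₂ - v₁)) : ℝ)
          = (inner ℝ (R ‖v₁‖ • A v₁ z - R ‖v₂‖ • A v₂ z) (i (v₁ - v₂)) : ℝ) := by
        rw [show v₂ - v₁ = -(v₁ - v₂) by abel, map_neg, inner_neg_right,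
          show R ‖v₂‖ • A v₂ z - R ‖v₁‖ • A v₁ z
            = -(R ‖v₁‖ • A v₁ z - R ‖v₂‖ • A v₂ z) by abel, inner_neg_left]
        ring
      have hnorm : ‖i (v₂ - v₁)‖ = ‖i (v₁ - v₂)‖ := by
        rw [show v₂ - v₁ = -(v₁ - v₂) by abel, map_neg, norm_neg]
      rw [heq, hnorm] at hswap
      exact hswap
    · have e1 : R ‖v₁‖ = 0 := hR0 _ (by rwa [abs_of_nonneg (norm_nonneg _)])
      have e2 : R ‖v₂‖ = 0 := hR0 _ (by rwa [abs_of_nonneg (norm_nonneg _)])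
      rw [e1, e2, zero_smul, zero_smul, sub_zero, inner_zero_left]
      positivity
end
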